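/- Let M be a matroid with finite ground set E, let v : E → ℝ be a weight function taking nonnegative values that is injective on E, let S ⊆ E, and let u ∈ E. If B is a max-weight basis of S and B' is a max-weight basis of S ∪ {u}, then the set difference B \ B' has cardinality at most 1. -/

import Mathlib

open scoped BigOperators

/-- `B` is a max-weight basis of `S` in the matroid `M` w.r.t. the weight function `v`:
`B` is a basis of `S` (a maximal `M`-independent subset of `S`) and every basis `B'`
of `S` has total weight at most that of `B`. -/
def IsMaxWeightBasis {α : Type*} (M : Matroid α) (v : α → ℝ) (S B : Set α) : Prop :=
  M.IsBasis B S ∧ ∀ B' : Set α, M.IsBasis B' S → ∑ᶠ x ∈ B', v x ≤ ∑ᶠ x ∈ B, v x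

/-!
With injective weights, a max-weight basis `B` of `S` is the greedy one: an element `x ∈ S`
lies in `B` iff it is not spanned by the heavier elements `S_{>x}` of `S`. Hence every
`x ∈ B \ B'` lies in `cl(S_{>x} ∪ {u}) \ cl(S_{>x})`, so `u ∈ cl(S_{>x} ∪ {x})` by the
exchange property. For two such elements `x₁`, `x₂` with `v x₁ < v x₂` this puts `u` in
`cl(S_{>x₁})`, and then `x₁ ∈ cl(S_{>x₁} ∪ {u}) = cl(S_{>x₁})`, a contradiction.
-/

open Set

theorem finsum_mem_insert_sdiff_singleton_add {α M : Type*} [AddCommMonoid M] (f : α → M)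
    {s : Set α} {a b : α} (hs : s.Finite) (ha : a ∉ s) (hb : b ∈ s) :
    ∑ᶠ x ∈ insert a s \ {b}, f x + f b = ∑ᶠ x ∈ s, f x + f a := by
  have hab : a ≠ b := ne_of_mem_of_not_mem hb ha |>.symm
  have hs' : ∑ᶠ x ∈ s, f x = f b + ∑ᶠ x ∈ s \ {b}, f x := by
    conv_lhs => rw [← insert_eq_of_mem hb, ← insert_sdiff_singleton]
    exact finsum_mem_insert f (fun h => h.2 rfl) hs.sdiff
  rw [← insert_sdiff_singleton_comm hab, finsum_mem_insert f (fun h => ha h.1) hs.sdiff, hs']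
  abel

namespace IsMaxWeightBasis

variable {α : Type*} {M : Matroid α} [M.RankFinite] {v : α → ℝ} {S B : Set α}

theorem le_of_exchange (hB : IsMaxWeightBasis M v S B) {e f : α} (heB : e ∉ B) (hfB : f ∈ B)
    (hexch : M.IsBasis (insert e B \ {f}) S) : v e ≤ v f := by
  have hsum := finsum_mem_insert_sdiff_singleton_add v hB.1.indep.finite heB hfB
  linarith [hB.2 _ hexch]

theorem mem_closure_heavier_of_notMem (hB : IsMaxWeightBasis M v S B) (hv : InjOn v M.E)
    {y : α} (hyS : y ∈ S) (hyB : y ∉ B) : y ∈ M.closure {b ∈ B | v y < v b} := by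
  have hC := hB.1.indep.fundCircuit_isCircuit (hB.1.subset_closure hyS) hyB
  have hCB := M.fundCircuit_subset_insert y B
  -- Each `f ≠ y` of the fundamental circuit of `y` can be exchanged for `y`.
  have hheavy : M.fundCircuit y B \ {y} ⊆ {b ∈ B | v y < v b} := by
    rintro f ⟨hfC, hfy : f ≠ y⟩
    have hfB : f ∈ B := (hCB hfC).resolve_left hfy
    have hexch : M.IsBasis (insert y B \ {f}) S :=
      hB.1.isBasis_insert_sdiff_of_mem_closure
        (M.closure_subset_closure (sdiff_subset_sdiff_left hCB)
          (hC.mem_closure_sdiff_singleton_of_mem hfC)) (.inr hfB) hyS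
    refine ⟨hfB, (hB.le_of_exchange hyB hfB hexch).lt_of_ne fun h => hfy ?_⟩
    exact (hv (hB.1.subset_ground hyS) (hB.1.indep.subset_ground hfB) h).symm
  exact M.closure_subset_closure hheavy
    (hC.mem_closure_sdiff_singleton_of_mem (M.mem_fundCircuit y B))

theorem notMem_closure_heavier (hB : IsMaxWeightBasis M v S B) (hv : InjOn v M.E) {x : α}
    (hx : x ∈ B) : x ∉ M.closure {y ∈ S | v x < v y} := by
  have hspan : {y ∈ S | v x < v y} ⊆ M.closure {b ∈ B | v x < v b} := by
    rintro y ⟨hyS, hxy⟩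
    by_cases hyB : y ∈ B
    · exact M.subset_closure _ (fun b hb => hB.1.indep.subset_ground hb.1) ⟨hyB, hxy⟩
    · refine M.closure_subset_closure ?_ (hB.mem_closure_heavier_of_notMem hv hyS hyB)
      exact fun b hb => ⟨hb.1, hxy.trans hb.2⟩
  have hlighter : {b ∈ B | v x < v b} ⊆ B \ {x} :=
    fun b hb => ⟨hb.1, fun hbx : b = x => (hbx ▸ hb.2).false⟩
  exact fun hxcl => hB.1.indep.notMem_closure_sdiff_of_mem hx
    (M.closure_subset_closure hlighter (M.closure_subset_closure_of_subset_closure hspan hxcl))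

end IsMaxWeightBasis

theorem maxWeightBasis_diff_insert_encard_le_one_general {α : Type*} (M : Matroid α)
    (hE : M.E.Finite)
    (v : α → ℝ) (hvinj : Set.InjOn v M.E)
    (S : Set α) (u : α)
    (B B' : Set α)
    (hB : IsMaxWeightBasis M v S B)
    (hB' : IsMaxWeightBasis M v (S ∪ {u}) B') :
    (B \ B').encard ≤ 1 := by
  have : M.Finite := ⟨hE⟩
  have hjump : ∀ x ∈ B \ B', x ∈ M.closure (insert u {y ∈ S | v x < v y}) \
      M.closure {y ∈ S | v x < v y} := by
    rintro x ⟨hxB, hxB'⟩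
    refine ⟨M.closure_subset_closure ?_ (hB'.mem_closure_heavier_of_notMem hvinj
      (.inl (hB.1.subset hxB)) hxB'), hB.notMem_closure_heavier hvinj hxB⟩
    rintro y ⟨hyB', hxy⟩
    rcases hB'.1.subset hyB' with hyS | rfl
    exacts [.inr ⟨hyS, hxy⟩, .inl rfl]
  have hnot_lt : ∀ x₁ ∈ B \ B', ∀ x₂ ∈ B \ B', ¬ v x₁ < v x₂ := by
    intro x₁ h₁ x₂ h₂ hlt
    have hheavier : insert x₂ {y ∈ S | v x₂ < v y} ⊆ {y ∈ S | v x₁ < v y} :=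
      insert_subset ⟨hB.1.subset h₂.1, hlt⟩ fun y hy => ⟨hy.1, hlt.trans hy.2⟩
    have hu : u ∈ M.closure {y ∈ S | v x₁ < v y} :=
      M.closure_subset_closure hheavier (Matroid.closure_exchange (hjump x₂ h₂)).1
    exact (hjump x₁ h₁).2 (Matroid.closure_insert_eq_of_mem_closure hu ▸ (hjump x₁ h₁).1)
  refine encard_le_one_iff.2 fun x₁ x₂ h₁ h₂ => hvinj (hB.1.indep.subset_ground h₁.1)
    (hB.1.indep.subset_ground h₂.1) ?_
  exact le_antisymm (not_lt.1 (hnot_lt x₂ h₂ x₁ h₁)) (not_lt.1 (hnot_lt x₁ h₁ x₂ h₂))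

/-- Adding one element `u` to `S` removes at most one element from
a max-weight basis: if `B` is a max-weight basis of `S` and `B'` one of `S ∪ {u}`,
then `B \ B'` has at most one element. -/
theorem maxWeightBasis_diff_insert_encard_le_one {α : Type*} (M : Matroid α)
    (hE : M.E.Finite)
    (v : α → ℝ) (hv0 : ∀ x ∈ M.E, 0 ≤ v x) (hvinj : Set.InjOn v M.E)
    (S : Set α) (hSE : S ⊆ M.E) (u : α) (hu : u ∈ M.E)
    (B B' : Set α)
    (hB : IsMaxWeightBasis M v S B)
    (hB' : IsMaxWeightBasis M v (S ∪ {u}) B') :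
    (B \ B').encard ≤ 1 :=
  maxWeightBasis_diff_insert_encard_le_one_general M hE v hvinj S u B B' hB hB'
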